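/- Let X be an n×n real matrix with XᵀX = Iₙ (orthonormal), let y ∈ ℝⁿ, and for λ ≥ 0 define L(α) = ‖y − Xα‖₂ + λ‖α‖₂ for α ∈ ℝⁿ. Then the infimum of L over ℝⁿ equals min(λ, 1)·‖y‖₂, and this infimum is attained. -/

import Mathlib

/-!
An orthonormal design is an isometry, so the triangle inequality gives
`‖y‖ ≤ ‖y - Xα‖ + ‖Xα‖ = ‖y - Xα‖ + ‖α‖`, and weighting both terms on the right by
`min λ 1` yields `min λ 1 * ‖y‖ ≤ L(α)`. The bound is attained at `α = 0` when `λ ≥ 1`,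
and at the perfect fit `α = Xᵀy` (so that `Xα = y`) when `λ ≤ 1`.
-/

open scoped BigOperators
open Matrix

/-- Euclidean norm of a vector in `ℝᵐ`. -/
noncomputable def norm2 {m : ℕ} (v : Fin m → ℝ) : ℝ := Real.sqrt (∑ i, (v i) ^ 2)

/-- The square-root group-LASSO objective with orthonormal design:
`L(α) = ‖y − Xα‖₂ + λ‖α‖₂`. -/
noncomputable def sqrtGroupLassoObj {n : ℕ} (X : Matrix (Fin n) (Fin n) ℝ)
    (y : Fin n → ℝ) (lam : ℝ) (α : Fin n → ℝ) : ℝ :=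
  norm2 (y - X.mulVec α) + lam * norm2 α

theorem norm2_eq_norm {m : ℕ} (v : Fin m → ℝ) : norm2 v = ‖WithLp.toLp 2 v‖ := by
  simp [EuclideanSpace.norm_eq, norm2]

theorem norm2_eq_sqrt_dotProduct {m : ℕ} (v : Fin m → ℝ) : norm2 v = Real.sqrt (v ⬝ᵥ v) := by
  simp only [norm2, dotProduct, sq]

theorem norm2_nonneg {m : ℕ} (v : Fin m → ℝ) : 0 ≤ norm2 v := Real.sqrt_nonneg _

theorem norm2_zero {m : ℕ} : norm2 (0 : Fin m → ℝ) = 0 := by simp [norm2]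

theorem norm2_mulVec_of_transpose_mul_self {m n : ℕ} (X : Matrix (Fin m) (Fin n) ℝ)
    (hX : Xᵀ * X = 1) (α : Fin n → ℝ) : norm2 (X *ᵥ α) = norm2 α := by
  rw [norm2_eq_sqrt_dotProduct, norm2_eq_sqrt_dotProduct, dotProduct_mulVec,
    ← mulVec_transpose, mulVec_mulVec, hX, one_mulVec]

theorem norm2_le_norm2_sub_mulVec_add {m n : ℕ} (X : Matrix (Fin m) (Fin n) ℝ)
    (hX : Xᵀ * X = 1) (y : Fin m → ℝ) (α : Fin n → ℝ) :
    norm2 y ≤ norm2 (y - X *ᵥ α) + norm2 α := by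
  rw [← norm2_mulVec_of_transpose_mul_self X hX α]
  simp only [norm2_eq_norm]
  simpa using norm_le_norm_sub_add (WithLp.toLp 2 y) (WithLp.toLp 2 (X *ᵥ α))

theorem min_mul_le_add_mul {lam a b c : ℝ} (hlam : 0 ≤ lam) (ha : 0 ≤ a) (hb : 0 ≤ b)
    (hc : c ≤ a + b) : min lam 1 * c ≤ a + lam * b :=
  calc min lam 1 * c ≤ min lam 1 * a + min lam 1 * b := by
        rw [← mul_add]
        exact mul_le_mul_of_nonneg_left hc (le_min hlam zero_le_one)
    _ ≤ a + lam * b := by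
        gcongr
        · exact mul_le_of_le_one_left ha (min_le_right _ _)
        · exact min_le_left _ _

section sqrtGroupLassoObj

variable {n : ℕ} (X : Matrix (Fin n) (Fin n) ℝ) (y : Fin n → ℝ) (lam : ℝ)

theorem sqrtGroupLassoObj_zero : sqrtGroupLassoObj X y lam 0 = norm2 y := by
  rw [sqrtGroupLassoObj, mulVec_zero, sub_zero, norm2_zero, mul_zero, add_zero]

theorem sqrtGroupLassoObj_transpose_mulVec (hX : X * Xᵀ = 1) :
    sqrtGroupLassoObj X y lam (Xᵀ *ᵥ y) = lam * norm2 y := by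
  have hfit : X *ᵥ (Xᵀ *ᵥ y) = y := by rw [mulVec_mulVec, hX, one_mulVec]
  have hXt : Xᵀᵀ * Xᵀ = 1 := by rwa [transpose_transpose]
  rw [sqrtGroupLassoObj, hfit, sub_self, norm2_zero, zero_add,
    norm2_mulVec_of_transpose_mul_self Xᵀ hXt]

theorem min_mul_norm2_le_sqrtGroupLassoObj (hX : Xᵀ * X = 1) (hlam : 0 ≤ lam)
    (α : Fin n → ℝ) : min lam 1 * norm2 y ≤ sqrtGroupLassoObj X y lam α :=
  min_mul_le_add_mul hlam (norm2_nonneg _) (norm2_nonneg _)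
    (norm2_le_norm2_sub_mulVec_add X hX y α)

end sqrtGroupLassoObj

/-- With orthonormal design `XᵀX = Iₙ`, the infimum of
`L(α) = ‖y − Xα‖₂ + λ‖α‖₂` over `ℝⁿ` equals `min(λ,1)·‖y‖₂` and is attained. -/
theorem infimum_of_sqrtGroupLasso {n : ℕ} (X : Matrix (Fin n) (Fin n) ℝ)
    (hX : X.transpose * X = 1) (y : Fin n → ℝ) (lam : ℝ) (hlam : 0 ≤ lam) :
    IsLeast (Set.range (sqrtGroupLassoObj X y lam)) (min lam 1 * norm2 y) := by
  refine ⟨?_, ?_⟩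
  · rcases le_total lam 1 with hle | hle
    · refine ⟨Xᵀ *ᵥ y, ?_⟩
      rw [sqrtGroupLassoObj_transpose_mulVec X y lam (mul_eq_one_comm.mp hX), min_eq_left hle]
    · refine ⟨0, ?_⟩
      rw [sqrtGroupLassoObj_zero, min_eq_right hle, one_mul]
  · rintro _ ⟨α, rfl⟩
    exact min_mul_norm2_le_sqrtGroupLassoObj X y lam hX hlam α
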